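/- arXiv:2107.07885 — 8 statements merged into one kernel-verified Lean document; each statement's English description precedes it below -/
import Mathlib

section
/- Let n ≥ 2 and 1/2 ≤ λ ≤ 1. For any i ≠ j in {1,…,n}, let ε = (ε_1,…,ε_n) be uniformly distributed over the set of vectors in {-1/2, 1/2}^n whose set of coordinates equal to 1/2 has size at most λn. Then E[ε_i ε_j] = (1/4)·(C(n-2,⌊λn⌋) − C(n-2,⌊λn⌋−1)) / ∑_{m=0}^{⌊λn⌋} C(n,m), and this quantity is ≤ 0. -/
open Finset

lemma countA (α : Type*) [Fintype α] [DecidableEq α] (t : ℕ) :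
    (Finset.univ.filter fun ε : α → Bool => (Finset.univ.filter fun x => ε x = true).card = t).card
      = (Fintype.card α).choose t := by
  classical
  rw [← Finset.card_univ, ← Finset.card_powersetCard]
  refine Finset.card_bij' (fun ε _ => Finset.univ.filter fun x => ε x = true)
    (fun s _ => fun x => x ∈ s) ?_ ?_ ?_ ?_
  · intro ε hε
    simp only [Finset.mem_filter, Finset.mem_univ, true_and] at hε
    simp [Finset.mem_powersetCard, hε]
  · intro s hs
    simp only [Finset.mem_powersetCard] at hs
    simp only [Finset.mem_filter, Finset.mem_univ, true_and]
    rw [← hs.2]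
    congr 1
    ext x; simp
  · intro ε hε
    funext x; simp
  · intro s hs
    ext x; simp

lemma sumfib (α : Type*) [Fintype α] [DecidableEq α] (g : ℕ → ℝ) :
    ∑ δ : α → Bool, g ((Finset.univ.filter fun x => δ x = true).card)
      = ∑ t ∈ Finset.range (Fintype.card α + 1), ((Fintype.card α).choose t : ℝ) * g t := by
  classical
  rw [← Finset.sum_fiberwise_of_maps_to (t := Finset.range (Fintype.card α + 1))
      (g := fun δ : α → Bool => (Finset.univ.filter fun x => δ x = true).card)
      (fun δ _ => by
        simp only [Finset.mem_range, Nat.lt_succ_iff]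
        exact (Finset.card_filter_le _ _).trans (by simp [Finset.card_univ]))]
  refine Finset.sum_congr rfl fun t ht => ?_
  rw [Finset.sum_congr rfl (fun δ hδ => by
      simp only [Finset.mem_filter] at hδ
      rw [hδ.2]), Finset.sum_const, ← countA α t]
  simp [mul_comm]

lemma sum_choose_delta (M s : ℕ) :
    ∑ t ∈ Finset.range (M+1), ((M.choose t : ℝ) * (if t = s then 1 else 0)) = (M.choose s : ℝ) := by
  rw [Finset.sum_eq_single s]
  · simp
  · intro b _ hb; simp [hb]
  · intro hs
    simp only [Finset.mem_range, not_lt, Nat.succ_le_iff] at hs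
    simp [Nat.choose_eq_zero_of_lt hs]

lemma sum_ite_le (f : ℕ → ℝ) (k N : ℕ) (h : k < N) :
    ∑ t ∈ Finset.range N, (if t ≤ k then f t else 0) = ∑ t ∈ Finset.range (k+1), f t := by
  rw [← Finset.sum_filter]
  congr 1
  ext x
  simp only [Finset.mem_filter, Finset.mem_range, Nat.lt_succ_iff]
  omega

lemma quadSum (k : ℕ) (hk : 1 ≤ k) (v : Bool → ℝ)
    (hv : v = fun b => if b then 1/2 else -(1/2)) (t : ℕ) :
    (∑ a : Bool, ∑ b : Bool,
      (if (if a then 1 else 0) + (if b then 1 else 0) + t ≤ k then v a * v b else 0))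
    = 1/4 * ((if t = k then 1 else 0) - (if t = k - 1 then 1 else 0)) := by
  subst hv
  simp only [Fintype.sum_bool, if_true, if_false, Bool.false_eq_true, Bool.true_eq_false]
  norm_num
  split_ifs <;> first | omega | norm_num

def phi {n : ℕ} {i j : Fin n} (hij : i ≠ j) :
    (({x : Fin n // x ≠ i ∧ x ≠ j} → Bool) × Bool × Bool) ≃ (Fin n → Bool) where
  toFun p := fun x => if h : x = i then p.2.1 else if h2 : x = j then p.2.2 else p.1 ⟨x, h, h2⟩
  invFun ε := (fun x => ε x.1, ε i, ε j)
  left_inv p := by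
    obtain ⟨δ, a, b⟩ := p
    refine Prod.ext ?_ (Prod.ext ?_ ?_)
    · funext x
      obtain ⟨x, hx1, hx2⟩ := x
      simp [hx1, hx2]
    · simp
    · simp [hij.symm]
  right_inv ε := by
    funext x
    by_cases h : x = i
    · simp [h]
    · by_cases h2 : x = j <;> simp [h, h2, hij.symm]

lemma phi_i {n : ℕ} {i j : Fin n} (hij : i ≠ j) (p) : phi hij p i = p.2.1 := by simp [phi]

lemma phi_j {n : ℕ} {i j : Fin n} (hij : i ≠ j) (p) : phi hij p j = p.2.2 := by
  simp [phi, hij.symm]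

lemma cnt_split {n : ℕ} {i j : Fin n} (hij : i ≠ j) (ε : Fin n → Bool) :
    (Finset.univ.filter fun x => ε x = true).card
      = ((if ε i then 1 else 0) + (if ε j then 1 else 0)
        + ∑ x : {x : Fin n // x ≠ i ∧ x ≠ j}, (if ε x.1 then 1 else 0)) := by
  classical
  rw [Finset.card_filter]
  rw [← Finset.sum_filter_add_sum_filter_not Finset.univ (fun x => x ≠ i ∧ x ≠ j)]
  have h1 : Finset.univ.filter (fun x : Fin n => ¬(x ≠ i ∧ x ≠ j)) = {i, j} := by
    ext x; simp; tauto
  rw [h1, Finset.sum_pair hij,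
    Finset.sum_subtype (p := fun x : Fin n => x ≠ i ∧ x ≠ j)
      (Finset.univ.filter fun x : Fin n => x ≠ i ∧ x ≠ j)
      (by intro x; simp) (fun x => if ε x = true then 1 else 0)]
  ring

/-- The correlation E[ε_i ε_j] for ε uniform on {−1/2,1/2}^n restricted to
at most λn coordinates equal to 1/2, and its nonpositivity for λ ≥ 1/2. -/
theorem stmt_2 (n : ℕ) (hn : 2 ≤ n) (lam : ℝ) (h1 : 1/2 ≤ lam) (h2 : lam ≤ 1)
    (i j : Fin n) (hij : i ≠ j) :
    let v : Bool → ℝ := fun b => if b then 1/2 else -(1/2)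
    let S : Finset (Fin n → Bool) := Finset.univ.filter
      (fun ε => ((Finset.univ.filter (fun m => ε m = true)).card : ℝ) ≤ lam * n)
    (∑ ε ∈ S, v (ε i) * v (ε j)) / S.card =
      (1/4) * (((n-2).choose ⌊lam * n⌋₊ : ℝ) - ((n-2).choose (⌊lam * n⌋₊ - 1) : ℝ)) /
        (∑ m ∈ Finset.range (⌊lam * n⌋₊ + 1), (n.choose m : ℝ)) ∧
    (∑ ε ∈ S, v (ε i) * v (ε j)) / S.card ≤ 0 := by
  intro v S
  have hvdef : v = fun b => if b then 1/2 else -(1/2) := rfl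
  set k := ⌊lam * n⌋₊ with hkdef
  have hn2 : (2:ℝ) ≤ n := by exact_mod_cast hn
  have hln : (0:ℝ) ≤ lam * n := by nlinarith
  have hS : S = Finset.univ.filter
      (fun ε : Fin n → Bool => (Finset.univ.filter fun m => ε m = true).card ≤ k) := by
    unfold S
    ext ε
    simp only [Finset.mem_filter, Finset.mem_univ, true_and]
    exact (Nat.le_floor_iff hln).symm
  have hk1 : 1 ≤ k := Nat.le_floor (by push_cast; nlinarith)
  have hkn : k ≤ n := by
    calc k ≤ ⌊(n:ℝ)⌋₊ := Nat.floor_mono (by nlinarith)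
    _ = n := Nat.floor_natCast n
  have h2k : n ≤ 2 * k + 1 := by
    have hflt : lam * n < (k:ℝ) + 1 := Nat.lt_floor_add_one _
    have hnk : (n:ℝ) < 2*(k:ℝ) + 2 := by nlinarith
    have : n < 2*k + 2 := by exact_mod_cast hnk
    omega
  clear_value k
  have hcardO : Fintype.card {x : Fin n // x ≠ i ∧ x ≠ j} = n - 2 := by
    rw [Fintype.card_subtype]
    have he : Finset.univ.filter (fun x : Fin n => x ≠ i ∧ x ≠ j)
        = Finset.univ \ {i, j} := by
      ext x; simp [not_or]
    rw [he, Finset.card_sdiff_of_subset (Finset.subset_univ _), Finset.card_pair hij,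
      Finset.card_univ, Fintype.card_fin]
  -- denominator
  have hDen : (S.card : ℝ) = ∑ m ∈ Finset.range (k+1), (n.choose m : ℝ) := by
    rw [hS, Finset.card_filter]
    push_cast
    have h := sumfib (Fin n) (fun t => if t ≤ k then (1:ℝ) else 0)
    simp only [Fintype.card_fin, mul_ite, mul_one, mul_zero] at h
    rw [h, sum_ite_le (fun t => (n.choose t : ℝ)) k (n+1) (by omega)]
  -- numerator
  have hNum : (∑ ε ∈ S, v (ε i) * v (ε j))
      = (1/4) * (((n-2).choose k : ℝ) - ((n-2).choose (k-1) : ℝ)) := by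
    rw [hS, Finset.sum_filter,
      ← Equiv.sum_comp (phi hij)
        (fun ε => if (Finset.univ.filter fun m => ε m = true).card ≤ k
          then v (ε i) * v (ε j) else 0)]
    have hpt : ∀ p : ({x : Fin n // x ≠ i ∧ x ≠ j} → Bool) × Bool × Bool,
        (if (Finset.univ.filter fun m => (phi hij p) m = true).card ≤ k
          then v ((phi hij p) i) * v ((phi hij p) j) else 0)
        = (if ((if p.2.1 then 1 else 0) + (if p.2.2 then 1 else 0)
              + (Finset.univ.filter fun x => p.1 x = true).card ≤ k)
            then v p.2.1 * v p.2.2 else 0) := by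
      intro p
      rw [cnt_split hij, phi_i hij, phi_j hij]
      have hrest : ∀ x : {x : Fin n // x ≠ i ∧ x ≠ j}, (phi hij p) x.1 = p.1 x := by
        intro ⟨x, hx1, hx2⟩
        simp [phi, hx1, hx2]
      simp only [hrest]
      congr 2
      rw [Finset.card_filter]
    rw [Finset.sum_congr rfl (fun p _ => hpt p)]
    calc (∑ p : ({x : Fin n // x ≠ i ∧ x ≠ j} → Bool) × Bool × Bool,
          if ((if p.2.1 then 1 else 0) + (if p.2.2 then 1 else 0)
              + (Finset.univ.filter fun x => p.1 x = true).card ≤ k)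
            then v p.2.1 * v p.2.2 else 0)
        = ∑ δ : {x : Fin n // x ≠ i ∧ x ≠ j} → Bool, ∑ a : Bool, ∑ b : Bool,
            (if ((if a then 1 else 0) + (if b then 1 else 0)
                + (Finset.univ.filter fun x => δ x = true).card ≤ k)
              then v a * v b else 0) := by
          rw [Fintype.sum_prod_type]
          exact Finset.sum_congr rfl fun δ _ => by
            rw [Fintype.sum_prod_type]
      _ = ∑ δ : {x : Fin n // x ≠ i ∧ x ≠ j} → Bool,
            (1/4 : ℝ) * ((if (Finset.univ.filter fun x => δ x = true).card = k then 1 else 0)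
              - (if (Finset.univ.filter fun x => δ x = true).card = k - 1 then 1 else 0)) :=
          Finset.sum_congr rfl fun δ _ => quadSum k hk1 v hvdef _
      _ = ∑ t ∈ Finset.range ((n-2)+1), ((n-2).choose t : ℝ) *
            ((1/4 : ℝ) * ((if t = k then 1 else 0) - (if t = k - 1 then 1 else 0))) := by
          have hsf := sumfib {x : Fin n // x ≠ i ∧ x ≠ j}
            (fun t => (1/4 : ℝ) * ((if t = k then 1 else 0) - (if t = k - 1 then 1 else 0)))
          rw [hcardO] at hsf
          exact hsf
      _ = (1/4) * ((∑ t ∈ Finset.range ((n-2)+1), ((n-2).choose t : ℝ) * (if t = k then 1 else 0))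
            - (∑ t ∈ Finset.range ((n-2)+1), ((n-2).choose t : ℝ) * (if t = k - 1 then 1 else 0))) := by
          rw [← Finset.sum_sub_distrib, Finset.mul_sum]
          exact Finset.sum_congr rfl (fun t _ => by ring)
      _ = (1/4) * (((n-2).choose k : ℝ) - ((n-2).choose (k-1) : ℝ)) := by
          rw [sum_choose_delta, sum_choose_delta]
  constructor
  · rw [hNum, hDen]
  · rw [hNum, hDen]
    have hch : (n-2).choose k ≤ (n-2).choose (k-1) := by
      have h := Nat.choose_succ_right_eq (n-2) (k-1)
      have hrw : k - 1 + 1 = k := by omega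
      rw [hrw] at h
      have hmul : (n-2).choose k * k ≤ (n-2).choose (k-1) * k := by
        rw [h]
        exact Nat.mul_le_mul_left _ (by omega)
      exact Nat.le_of_mul_le_mul_right hmul (by omega)
    have hchR : ((n-2).choose k : ℝ) ≤ ((n-2).choose (k-1) : ℝ) := by exact_mod_cast hch
    apply div_nonpos_of_nonpos_of_nonneg
    · nlinarith
    · positivity
end

section
/- For any 0 < λ < 1/3 and n large enough, there exists a sequence (a_1,…,a_n) of positive integers with a_i ≤ λ^3 n^2 · 2^{f(λ)n} for all i, such that for all distinct subsets A_1, A_2 of {1,…,n} with |A_1| ≤ λn and |A_2| ≤ λn, ∑_{i∈A_1} a_i ≠ ∑_{j∈A_2} a_j. -/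
/-!
Choose the values `a i` in `{1, …, M}`. As `∑_{A₁} a = ∑_{A₂} a` iff the same holds for
`A₁ \ A₂` and `A₂ \ A₁`, only distinct disjoint pairs of sets of size at most `λn` matter, and
for each of them the sums agree for at most `M^(n-1)` of the `M^n` choices, since the value at a
point of the symmetric difference is determined by the others. So a good choice exists once `M`
exceeds the number of such pairs. Weight a disjoint pair `(B₁, B₂)` by
`λ^(|B₁|+|B₂|) (1-2λ)^(n-|B₁|-|B₂|)`: all weights add up to `(λ + λ + (1-2λ))^n = 1`, and as
`λ ≤ 1-2λ` a pair with `|B₁| + |B₂| ≤ 2λn` weighs at least `λ^(2λn) (1-2λ)^((1-2λ)n) = 2^(-f(λ)n)`.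
Hence there are at most `2^(f(λ)n)` pairs, and `M = ⌊2^(f(λ)n)⌋ + 1 ≤ 2·2^(f(λ)n)` works.
-/

open Finset Fintype

section Counting

variable {ι α : Type*} [DecidableEq ι] [AddCancelCommMonoid α]

lemma apply_eq_of_sum_eq_sum {B₁ B₂ : Finset ι} {i₀ : ι} (h₁ : i₀ ∈ B₁) (h₂ : i₀ ∉ B₂)
    {a b : ι → α} (hab : ∀ i ≠ i₀, a i = b i)
    (ha : ∑ i ∈ B₁, a i = ∑ i ∈ B₂, a i) (hb : ∑ i ∈ B₁, b i = ∑ i ∈ B₂, b i) :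
    a i₀ = b i₀ := by
  have hB₂ : ∑ i ∈ B₂, a i = ∑ i ∈ B₂, b i :=
    sum_congr rfl fun i hi => hab i (ne_of_mem_of_not_mem hi h₂)
  have hB₁ : ∑ i ∈ B₁.erase i₀, a i = ∑ i ∈ B₁.erase i₀, b i :=
    sum_congr rfl fun i hi => hab i (ne_of_mem_erase hi)
  rw [← add_sum_erase _ _ h₁] at ha hb
  rw [hB₁, hB₂] at ha
  exact add_right_cancel (ha.trans hb.symm)

variable [Fintype ι] [DecidableEq α]

lemma card_filter_sum_eq_sum_mul_le (S : Finset α) {B₁ B₂ : Finset ι} (hB : B₁ ≠ B₂) :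
    #{a ∈ piFinset fun _ : ι => S | ∑ i ∈ B₁, a i = ∑ i ∈ B₂, a i} * #S ≤ #S ^ card ι := by
  wlog hsub : ¬ B₁ ⊆ B₂ generalizing B₁ B₂
  · have h := this hB.symm fun h => hB (subset_antisymm (not_not.1 hsub) h)
    simpa only [eq_comm] using h
  obtain ⟨i₀, h₁, h₂⟩ := not_subset.1 hsub
  -- On the event, `a i₀` is determined by the other values: `(a, x) ↦ update a i₀ x` is injective.
  rw [← card_product]
  refine (card_le_card_of_injOn (t := piFinset fun _ : ι => S)
    (fun p => Function.update p.1 i₀ p.2) ?_ ?_).trans_eq (by simp)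
  · intro p hp
    simp only [coe_product, Set.mem_prod, coe_filter, mem_coe, mem_piFinset] at hp ⊢
    intro i
    rcases eq_or_ne i i₀ with rfl | hi
    · simpa using hp.2
    · simpa [hi] using hp.1.1 i
  · intro p hp q hq hpq
    simp only [coe_product, Set.mem_prod, coe_filter, mem_coe] at hp hq
    have hoff (i) (hi : i ≠ i₀) : p.1 i = q.1 i := by
      simpa [hi] using congrFun hpq i
    ext1
    · funext i
      rcases eq_or_ne i i₀ with rfl | hi
      · exact apply_eq_of_sum_eq_sum h₁ h₂ hoff hp.1.2 hq.1.2
      · exact hoff i hi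
    · simpa using congrFun hpq i₀

theorem exists_forall_sum_ne_sum (S : Finset α) (P : Finset (Finset ι × Finset ι))
    (hP : ∀ p ∈ P, p.1 ≠ p.2) (hPS : #P < #S) :
    ∃ a : ι → α, (∀ i, a i ∈ S) ∧ ∀ p ∈ P, ∑ i ∈ p.1, a i ≠ ∑ i ∈ p.2, a i := by
  set bad := P.biUnion fun p =>
    {a ∈ piFinset fun _ : ι => S | ∑ i ∈ p.1, a i = ∑ i ∈ p.2, a i}
  have hbad : #bad * #S < #S ^ card ι * #S :=
    calc #bad * #S
        ≤ ∑ p ∈ P, #{a ∈ piFinset fun _ : ι => S | ∑ i ∈ p.1, a i = ∑ i ∈ p.2, a i} * #S :=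
          by rw [← sum_mul]; exact Nat.mul_le_mul_right _ card_biUnion_le
      _ ≤ ∑ _p ∈ P, #S ^ card ι :=
          sum_le_sum fun p hp => card_filter_sum_eq_sum_mul_le S (hP p hp)
      _ < #S ^ card ι * #S := by
          rw [sum_const, smul_eq_mul, mul_comm]
          exact Nat.mul_lt_mul_of_pos_left hPS (pow_pos (by omega) _)
  obtain ⟨a, ha, hab⟩ : ∃ a ∈ piFinset fun _ : ι => S, a ∉ bad := by
    refine exists_mem_notMem_of_card_lt_card ?_
    rw [card_piFinset, prod_const, card_univ]
    exact lt_of_mul_lt_mul_right hbad (Nat.zero_le _)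
  refine ⟨a, mem_piFinset.1 ha, fun p hp heq => hab ?_⟩
  exact mem_biUnion.2 ⟨p, hp, mem_filter.2 ⟨ha, heq⟩⟩

end Counting

/-- The exponent `f(λ)`: the entropy in bits of the distribution `(λ, λ, 1 - 2λ)`. -/
noncomputable def entropyExponent (lam : ℝ) : ℝ :=
  -(2 * lam * Real.logb 2 lam) - (1 - 2 * lam) * Real.logb 2 (1 - 2 * lam)

lemma rpow_mul_rpow_sub_le_of_le {x y s t : ℝ} (hx : 0 < x) (hxy : x ≤ y) (hst : s ≤ t) (n : ℝ) :
    x ^ t * y ^ (n - t) ≤ x ^ s * y ^ (n - s) := by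
  have hy : 0 < y := hx.trans_le hxy
  calc x ^ t * y ^ (n - t) = x ^ s * x ^ (t - s) * y ^ (n - t) := by
        rw [← Real.rpow_add hx, add_sub_cancel]
    _ ≤ x ^ s * y ^ (t - s) * y ^ (n - t) := by
        gcongr
    _ = x ^ s * y ^ (n - s) := by
        rw [mul_assoc, ← Real.rpow_add hy]; ring_nf

lemma rpow_mul_rpow_eq_two_rpow_neg_entropyExponent {lam : ℝ} (h0 : 0 < lam)
    (h1 : 0 < 1 - 2 * lam) (x : ℝ) :
    lam ^ (2 * lam * x) * (1 - 2 * lam) ^ ((1 - 2 * lam) * x)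
      = 2 ^ (-(entropyExponent lam * x)) := by
  apply Real.log_injOn_pos (Set.mem_Ioi.2 (by positivity)) (Set.mem_Ioi.2 (by positivity))
  rw [Real.log_mul (by positivity) (by positivity), Real.log_rpow h0, Real.log_rpow h1,
    Real.log_rpow two_pos, entropyExponent, Real.logb, Real.logb]
  field_simp
  ring

variable {ι : Type*} [Fintype ι] [DecidableEq ι]

lemma sum_disjoint_pow_card {R : Type*} [CommSemiring R] (x y z : R) :
    ∑ p ∈ (univ : Finset (Finset ι × Finset ι)) with Disjoint p.1 p.2,
      x ^ #p.1 * y ^ #p.2 * z ^ #(p.1 ∪ p.2)ᶜ = (x + (y + z)) ^ card ι := by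
  have inner (B : Finset ι) : (y + z) ^ #Bᶜ = ∑ C ∈ Bᶜ.powerset, y ^ #C * z ^ #(B ∪ C)ᶜ := by
    rw [← prod_const, Finset.prod_add]
    refine sum_congr rfl fun C _ => ?_
    rw [prod_const, prod_const, compl_union, sdiff_eq_inter_compl]
  have hfilter (B : Finset ι) : ({C | Disjoint B C} : Finset (Finset ι)) = Bᶜ.powerset := by
    ext C
    simp [subset_compl_iff_disjoint_left]
  rw [← card_univ, ← prod_const, Fintype.prod_add, sum_filter, ← univ_product_univ, sum_product]
  refine sum_congr rfl fun B _ => ?_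
  rw [prod_const, prod_const, inner, ← sum_filter, hfilter, mul_sum]
  simp only [mul_assoc]

theorem card_le_two_rpow_entropyExponent {lam : ℝ} (h0 : 0 < lam) (h3 : lam ≤ 1 / 3)
    (Q : Finset (Finset ι × Finset ι))
    (hQ : ∀ p ∈ Q, Disjoint p.1 p.2 ∧ ((#p.1 + #p.2 : ℕ) : ℝ) ≤ 2 * lam * card ι) :
    (#Q : ℝ) ≤ 2 ^ (entropyExponent lam * card ι) := by
  set μ := 1 - 2 * lam
  have hμ : lam ≤ μ := by linarith
  have hμ0 : 0 < μ := h0.trans_le hμ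
  set w : Finset ι × Finset ι → ℝ := fun p => lam ^ #p.1 * lam ^ #p.2 * μ ^ #(p.1 ∪ p.2)ᶜ
  have hw (p) (hp : p ∈ Q) : 2 ^ (-(entropyExponent lam * card ι)) ≤ w p := by
    obtain ⟨hdisj, hcard⟩ := hQ p hp
    have hj : #p.1 + #p.2 ≤ card ι := by
      rw [← card_union_of_disjoint hdisj]; exact card_le_univ _
    have hwp : w p = lam ^ ((#p.1 + #p.2 : ℕ) : ℝ) *
        μ ^ ((card ι : ℝ) - ((#p.1 + #p.2 : ℕ) : ℝ)) := by
      simp only [w]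
      rw [← Nat.cast_sub hj, Real.rpow_natCast, Real.rpow_natCast, pow_add, card_compl,
        card_union_of_disjoint hdisj]
    rw [hwp, ← rpow_mul_rpow_eq_two_rpow_neg_entropyExponent h0 (by linarith)]
    convert rpow_mul_rpow_sub_le_of_le h0 hμ hcard (card ι) using 3
    ring
  have htotal : ∑ p ∈ (univ : Finset (Finset ι × Finset ι)) with Disjoint p.1 p.2, w p = 1 := by
    rw [sum_disjoint_pow_card, show lam + (lam + μ) = 1 by ring, one_pow]
  have hsum : (#Q : ℝ) * (2 ^ (entropyExponent lam * card ι))⁻¹ ≤ 1 :=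
    calc (#Q : ℝ) * (2 ^ (entropyExponent lam * card ι))⁻¹
        = ∑ _p ∈ Q, (2 : ℝ) ^ (-(entropyExponent lam * card ι)) := by
          rw [sum_const, nsmul_eq_mul, Real.rpow_neg zero_le_two]
      _ ≤ ∑ p ∈ Q, w p := sum_le_sum hw
      _ ≤ ∑ p ∈ (univ : Finset (Finset ι × Finset ι)) with Disjoint p.1 p.2, w p :=
          sum_le_sum_of_subset_of_nonneg (fun p hp => mem_filter.2 ⟨mem_univ _, (hQ p hp).1⟩)
            fun p _ _ => by simp only [w]; positivity
      _ = 1 := htotal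
  rwa [← div_eq_mul_inv, div_le_one (by positivity)] at hsum

lemma entropyExponent_nonneg {lam : ℝ} (h0 : 0 < lam) (h2 : lam ≤ 1 / 2) :
    0 ≤ entropyExponent lam := by
  have h₁ : Real.logb 2 lam ≤ 0 := Real.logb_nonpos one_lt_two h0.le (by linarith)
  have h₂ : Real.logb 2 (1 - 2 * lam) ≤ 0 :=
    Real.logb_nonpos one_lt_two (by linarith) (by linarith)
  rw [entropyExponent]
  nlinarith

lemma sdiff_ne_sdiff_of_ne {α : Type*} [DecidableEq α] {s t : Finset α} (h : s ≠ t) :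
    s \ t ≠ t \ s := by
  intro hst
  refine h (ext fun x => ?_)
  have := congrArg (x ∈ ·) hst
  simp only [mem_sdiff, eq_iff_iff] at this
  tauto

theorem exists_sum_ne_sum_of_card_le {lam : ℝ} (h0 : 0 < lam) (h3 : lam ≤ 1 / 3) :
    ∃ a : ι → ℕ, (∀ i, 0 < a i ∧ (a i : ℝ) ≤ 2 * 2 ^ (entropyExponent lam * card ι)) ∧
      ∀ B₁ B₂ : Finset ι, (#B₁ : ℝ) ≤ lam * card ι → (#B₂ : ℝ) ≤ lam * card ι → B₁ ≠ B₂ →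
        ∑ i ∈ B₁, a i ≠ ∑ i ∈ B₂, a i := by
  classical
  set c : ℝ := 2 ^ (entropyExponent lam * card ι)
  have hc : 1 ≤ c := Real.one_le_rpow one_le_two
    (mul_nonneg (entropyExponent_nonneg h0 (by linarith)) (Nat.cast_nonneg _))
  set P := ((univ : Finset (Finset ι × Finset ι)).filter fun p => Disjoint p.1 p.2 ∧ p.1 ≠ p.2 ∧
    (#p.1 : ℝ) ≤ lam * card ι ∧ (#p.2 : ℝ) ≤ lam * card ι)
  have hP : #P ≤ ⌊c⌋₊ := by
    refine Nat.le_floor (card_le_two_rpow_entropyExponent h0 h3 P fun p hp => ?_)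
    obtain ⟨-, hdisj, -, h₁, h₂⟩ := mem_filter.1 hp
    exact ⟨hdisj, by push_cast; linarith⟩
  obtain ⟨a, ha, hsep⟩ := exists_forall_sum_ne_sum (Icc 1 (⌊c⌋₊ + 1)) P
    (fun p hp => (mem_filter.1 hp).2.2.1) (by rw [Nat.card_Icc]; omega)
  refine ⟨a, fun i => ?_, fun B₁ B₂ h₁ h₂ hne => ?_⟩
  · obtain ⟨hpos, hle⟩ := mem_Icc.1 (ha i)
    refine ⟨hpos, ?_⟩
    calc (a i : ℝ) ≤ ⌊c⌋₊ + 1 := by exact_mod_cast hle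
      _ ≤ c + c := add_le_add (Nat.floor_le (by linarith)) hc
      _ = 2 * c := by ring
  · rw [← sum_sdiff_ne_sum_sdiff_iff]
    refine hsep (B₁ \ B₂, B₂ \ B₁) (mem_filter.2
      ⟨mem_univ _, disjoint_sdiff_sdiff, sdiff_ne_sdiff_of_ne hne, ?_, ?_⟩)
    · exact le_trans (by exact_mod_cast card_le_card sdiff_subset) h₁
    · exact le_trans (by exact_mod_cast card_le_card sdiff_subset) h₂

lemma sum_dite_mem_eq_sum_subtype {α M : Type*} [AddCommMonoid M] {s A : Finset α}
    [DecidablePred (· ∈ s)] (hA : A ⊆ s) (a : s → M) :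
    ∑ i ∈ A, (if h : i ∈ s then a ⟨i, h⟩ else 0) = ∑ i ∈ A.subtype (· ∈ s), a i := by
  rw [← sum_subtype_of_mem _ hA]
  exact sum_congr rfl fun i _ => dif_pos i.2

/-- Combinatorial Nullstellensatz upper bound: for 0 < λ < 1/3 and n large,
there is an F_{λ,n}-sum distinct sequence of positive integers bounded by
λ³ n² 2^{f(λ)n}. -/
theorem stmt_6 (lam : ℝ) (h0 : 0 < lam) (h3 : lam < 1/3) :
    ∃ N : ℕ, ∀ n : ℕ, N ≤ n →
      ∃ a : ℕ → ℕ,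
        (∀ i ∈ Finset.Icc 1 n, 0 < a i ∧
          (a i : ℝ) ≤ lam ^ 3 * (n : ℝ) ^ 2 *
            (2 : ℝ) ^ ((-(2 * lam * Real.logb 2 lam) -
              (1 - 2 * lam) * Real.logb 2 (1 - 2 * lam)) * n)) ∧
        ∀ A₁ A₂ : Finset ℕ, A₁ ⊆ Finset.Icc 1 n → A₂ ⊆ Finset.Icc 1 n →
          (A₁.card : ℝ) ≤ lam * n → (A₂.card : ℝ) ≤ lam * n → A₁ ≠ A₂ →
          ∑ i ∈ A₁, a i ≠ ∑ j ∈ A₂, a j := by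
  refine ⟨⌈2 / lam ^ 3⌉₊, fun n hn => ?_⟩
  have hn2 : 2 ≤ lam ^ 3 * (n : ℝ) ^ 2 := by
    have hl3 : lam ^ 3 ≤ 1 := pow_le_one₀ h0.le (by linarith)
    have hn' : 2 ≤ lam ^ 3 * n := by
      rw [← div_le_iff₀' (by positivity)]; exact Nat.ceil_le.1 hn
    nlinarith
  set s := Icc 1 n
  obtain ⟨a, ha, hsep⟩ := exists_sum_ne_sum_of_card_le (ι := s) h0 h3.le
  have hcard : Fintype.card s = n := by simp [s]
  rw [hcard] at ha hsep
  refine ⟨fun i => if h : i ∈ s then a ⟨i, h⟩ else 0, fun i hi => ?_,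
    fun A₁ A₂ h₁ h₂ hc₁ hc₂ hne => ?_⟩
  · simp only [dif_pos hi]
    exact ⟨(ha _).1, (ha _).2.trans (mul_le_mul_of_nonneg_right hn2 (by positivity))⟩
  · have hmap {A : Finset ℕ} (hA : A ⊆ s) :
        (A.subtype (· ∈ s)).map (Function.Embedding.subtype _) = A :=
      subtype_map_of_mem hA
    have hcard_subtype {A : Finset ℕ} (hA : A ⊆ s) : #(A.subtype (· ∈ s)) = #A := by
      rw [Finset.card_subtype, filter_true_of_mem hA]
    rw [sum_dite_mem_eq_sum_subtype h₁, sum_dite_mem_eq_sum_subtype h₂]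
    refine hsep _ _ (by rwa [hcard_subtype h₁]) (by rwa [hcard_subtype h₂]) fun h => hne ?_
    rw [← hmap h₁, ← hmap h₂, h]
end

section
/- Fix n ≥ 1 and define b_i = 2^{i−1} for 1 ≤ i ≤ n−1, and b_n = ∑_{0 ≤ j < n/2 − 1} 2^{2j} (sum over integers j with j < n/2 − 1). Then for any two subsets A_1, A_2 of {1,…,n} with |A_1| + |A_2| < n/2 and A_1 ≠ A_2, we have ∑_{i∈A_1} b_i ≠ ∑_{j∈A_2} b_j. -/
/-!
Apart from `b n`, the `b i` are distinct powers of two, so if `n` lies in both sets or in neither,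
the two sums are binary expansions and determine the sets. If `n` lies in `A₁` only, the equality
writes `b n = 0101…01₂` (`k = (n - 1) / 2` ones) as a difference `t - s` of numbers having at most
`|A₁| - 1 + |A₂| < k` binary ones together. That is impossible: `0101…01₂` has no signed-binary
representation with fewer than `k` nonzero digits. Such weight bounds pass from `x` to `2x`, and
from `x` and `x + 1` jointly to `2x + 1` with one more digit, so an induction that tracks both
`0101…01₂` and `0101…01₂ + 1` climbs two bits at a time.
-/

open Finset

def popcount (m : ℕ) : ℕ := m.bitIndices.length

@[simp] lemma popcount_two_mul (m : ℕ) : popcount (2 * m) = popcount m := by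
  simp [popcount]

@[simp] lemma popcount_two_mul_add_one (m : ℕ) : popcount (2 * m + 1) = popcount m + 1 := by
  simp [popcount]

lemma popcount_sum_two_pow (s : Finset ℕ) : popcount (∑ i ∈ s, 2 ^ i) = s.card := by
  rw [popcount, ← List.toFinset_card_of_nodup Nat.bitIndices_sorted.nodup,
    toFinset_bitIndices_sum_two_pow]

/-- Every signed-binary representation of `x` has at least `w` nonzero digits. -/
def SignedWeightGE (x w : ℕ) : Prop := ∀ s, w ≤ popcount (x + s) + popcount s

namespace SignedWeightGE

variable {x v w : ℕ}

lemma mono (h : SignedWeightGE x w) (hvw : v ≤ w) : SignedWeightGE x v :=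
  fun s => hvw.trans (h s)

lemma two_mul (h : SignedWeightGE x w) : SignedWeightGE (2 * x) w := by
  intro s
  obtain ⟨u, rfl | rfl⟩ := Nat.even_or_odd' s
  · rw [← mul_add, popcount_two_mul, popcount_two_mul]
    exact h u
  · rw [show 2 * x + (2 * u + 1) = 2 * (x + u) + 1 by ring, popcount_two_mul_add_one,
      popcount_two_mul_add_one]
    have := h u
    omega

lemma two_mul_add_one (h₀ : SignedWeightGE x w) (h₁ : SignedWeightGE (x + 1) w) :
    SignedWeightGE (2 * x + 1) (w + 1) := by
  intro s
  obtain ⟨u, rfl | rfl⟩ := Nat.even_or_odd' s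
  · rw [show 2 * x + 1 + 2 * u = 2 * (x + u) + 1 by ring, popcount_two_mul_add_one,
      popcount_two_mul]
    have := h₀ u
    omega
  · rw [show 2 * x + 1 + (2 * u + 1) = 2 * (x + 1 + u) by ring, popcount_two_mul,
      popcount_two_mul_add_one]
    have := h₁ u
    omega

end SignedWeightGE

def alternatingBits (k : ℕ) : ℕ := ∑ j ∈ range k, 2 ^ (2 * j)

lemma alternatingBits_succ (k : ℕ) :
    alternatingBits (k + 1) = 2 * (2 * alternatingBits k) + 1 := by
  simp only [alternatingBits, sum_range_succ', mul_sum, pow_zero, mul_zero]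
  congr 1
  exact sum_congr rfl fun j _ => by ring

theorem signedWeightGE_alternatingBits (k : ℕ) :
    SignedWeightGE (alternatingBits k) k ∧ SignedWeightGE (alternatingBits k + 1) k := by
  induction k with
  | zero => exact ⟨fun _ => Nat.zero_le _, fun _ => Nat.zero_le _⟩
  | succ k ih =>
    have hodd : SignedWeightGE (2 * alternatingBits k + 1) (k + 1) := ih.1.two_mul_add_one ih.2
    rw [alternatingBits_succ, show 2 * (2 * alternatingBits k) + 1 + 1
      = 2 * (2 * alternatingBits k + 1) by ring]
    exact ⟨ih.1.two_mul.two_mul_add_one (hodd.mono k.le_succ), hodd.two_mul⟩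

lemma le_card_add_card_of_sum_two_pow_eq {k : ℕ} {s t : Finset ℕ}
    (h : ∑ i ∈ t, 2 ^ i = alternatingBits k + ∑ i ∈ s, 2 ^ i) : k ≤ t.card + s.card := by
  have := (signedWeightGE_alternatingBits k).1 (∑ i ∈ s, 2 ^ i)
  rwa [← h, popcount_sum_two_pow, popcount_sum_two_pow] at this

section Shift

variable {X Y : Finset ℕ}

lemma injOn_sub_one (hX : ∀ i ∈ X, 1 ≤ i) : Set.InjOn (· - 1) (X : Set ℕ) :=
  fun i hi j hj hij => by
    have := hX i hi
    have := hX j hj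
    simp only at hij
    omega

lemma image_sub_one_injective (hX : ∀ i ∈ X, 1 ≤ i) (hY : ∀ i ∈ Y, 1 ≤ i)
    (h : X.image (· - 1) = Y.image (· - 1)) : X = Y := by
  have key : ∀ Z : Finset ℕ, (∀ i ∈ Z, 1 ≤ i) → (Z.image (· - 1)).image (· + 1) = Z := by
    intro Z hZ
    rw [image_image]
    exact (image_congr fun i hi => Nat.sub_add_cancel (hZ i hi)).trans image_id
  rw [← key X hX, ← key Y hY, h]

end Shift

section Sequence

variable {n : ℕ} {b : ℕ → ℕ} {X Y : Finset ℕ}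

lemma one_le_of_mem_erase (hX : X ⊆ Icc 1 n) : ∀ i ∈ X.erase n, 1 ≤ i :=
  fun _ hi => (mem_Icc.mp (hX (mem_of_mem_erase hi))).1

lemma sum_eq_ite_add_sum_two_pow (hb : ∀ i, 1 ≤ i → i ≤ n - 1 → b i = 2 ^ (i - 1))
    (hX : X ⊆ Icc 1 n) :
    ∑ i ∈ X, b i = (if n ∈ X then b n else 0) + ∑ i ∈ (X.erase n).image (· - 1), 2 ^ i := by
  have hpow : ∑ i ∈ X.erase n, b i = ∑ i ∈ (X.erase n).image (· - 1), 2 ^ i := by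
    rw [sum_image (injOn_sub_one (one_le_of_mem_erase hX))]
    refine sum_congr rfl fun i hi => hb i (one_le_of_mem_erase hX i hi) ?_
    have := mem_Icc.mp (hX (mem_of_mem_erase hi))
    have := ne_of_mem_erase hi
    omega
  split_ifs with hn
  · rw [← add_sum_erase X b hn, hpow]
  · rw [← hpow, erase_eq_of_notMem hn, zero_add]

lemma eq_of_sum_eq_of_mem_iff (hb : ∀ i, 1 ≤ i → i ≤ n - 1 → b i = 2 ^ (i - 1))
    (hX : X ⊆ Icc 1 n) (hY : Y ⊆ Icc 1 n) (hn : n ∈ X ↔ n ∈ Y)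
    (h : ∑ i ∈ X, b i = ∑ i ∈ Y, b i) : X = Y := by
  rw [sum_eq_ite_add_sum_two_pow hb hX, sum_eq_ite_add_sum_two_pow hb hY] at h
  simp only [hn, add_right_inj] at h
  have herase := image_sub_one_injective (one_le_of_mem_erase hX) (one_le_of_mem_erase hY)
    (geomSum_injective le_rfl h)
  ext i
  by_cases hi : i = n
  · rw [hi, hn]
  · simpa only [mem_erase, hi, ne_eq, not_false_eq_true, true_and] using Finset.ext_iff.mp herase i

lemma lt_card_add_card_of_sum_eq (hb : ∀ i, 1 ≤ i → i ≤ n - 1 → b i = 2 ^ (i - 1))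
    (hbn : b n = alternatingBits ((n - 1) / 2)) (hX : X ⊆ Icc 1 n) (hY : Y ⊆ Icc 1 n)
    (hnX : n ∈ X) (hnY : n ∉ Y) (h : ∑ i ∈ X, b i = ∑ i ∈ Y, b i) :
    (n - 1) / 2 < X.card + Y.card := by
  rw [sum_eq_ite_add_sum_two_pow hb hX, sum_eq_ite_add_sum_two_pow hb hY, if_pos hnX,
    if_neg hnY, zero_add, hbn] at h
  have hk := le_card_add_card_of_sum_two_pow_eq h.symm
  rw [card_image_of_injOn (injOn_sub_one (one_le_of_mem_erase hY)),
    card_image_of_injOn (injOn_sub_one (one_le_of_mem_erase hX)), erase_eq_of_notMem hnY,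
    card_erase_of_mem hnX] at hk
  have := card_pos.mpr ⟨n, hnX⟩
  omega

end Sequence

theorem stmt_7_general (n : ℕ) (b : ℕ → ℕ)
    (hb1 : ∀ i, 1 ≤ i → i ≤ n - 1 → b i = 2 ^ (i - 1))
    (hbn : b n = ∑ j ∈ Finset.range ((n - 1) / 2), 2 ^ (2 * j))
    (A₁ A₂ : Finset ℕ) (h₁ : A₁ ⊆ Finset.Icc 1 n) (h₂ : A₂ ⊆ Finset.Icc 1 n)
    (hcard : ((A₁.card : ℝ) + (A₂.card : ℝ)) < (n : ℝ) / 2) (hne : A₁ ≠ A₂) :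
    ∑ i ∈ A₁, b i ≠ ∑ j ∈ A₂, b j := by
  intro hsum
  have hsmall : 2 * (A₁.card + A₂.card) < n := by
    have : ((2 * (A₁.card + A₂.card) : ℕ) : ℝ) < n := by push_cast; linarith
    exact_mod_cast this
  by_cases hn₁ : n ∈ A₁ <;> by_cases hn₂ : n ∈ A₂
  · exact hne (eq_of_sum_eq_of_mem_iff hb1 h₁ h₂ (iff_of_true hn₁ hn₂) hsum)
  · have := lt_card_add_card_of_sum_eq hb1 hbn h₁ h₂ hn₁ hn₂ hsum
    omega
  · have := lt_card_add_card_of_sum_eq hb1 hbn h₂ h₁ hn₂ hn₁ hsum.symm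
    omega
  · exact hne (eq_of_sum_eq_of_mem_iff hb1 h₁ h₂ (iff_of_false hn₁ hn₂) hsum)

/-- The sequence b_i = 2^{i−1} (i ≤ n−1), b_n = ∑_{j < n/2−1} 2^{2j} has distinct
sums over pairs of subsets with |A₁| + |A₂| < n/2. -/
theorem stmt_7 (n : ℕ) (hn : 1 ≤ n) (b : ℕ → ℕ)
    (hb1 : ∀ i, 1 ≤ i → i ≤ n - 1 → b i = 2 ^ (i - 1))
    (hbn : b n = ∑ j ∈ Finset.range ((n - 1) / 2), 2 ^ (2 * j))
    (A₁ A₂ : Finset ℕ) (h₁ : A₁ ⊆ Finset.Icc 1 n) (h₂ : A₂ ⊆ Finset.Icc 1 n)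
    (hcard : ((A₁.card : ℝ) + (A₂.card : ℝ)) < (n : ℝ) / 2) (hne : A₁ ≠ A₂) :
    ∑ i ∈ A₁, b i ≠ ∑ j ∈ A₂, b j :=
  stmt_7_general n b hb1 hbn A₁ A₂ h₁ h₂ hcard hne
end

section
/- The bound in the previous construction is tight: for every even n ≥ 6, with b_i = 2^{i−1} for i ≤ n−1 and b_n = ∑_{0 ≤ j < n/2−1} 2^{2j}, the sets A_1 = {n} and A_2 = {2i+1 : 0 ≤ i ≤ n/2 − 2} satisfy |A_1| + |A_2| = n/2 and ∑_{i∈A_1} b_i = ∑_{j∈A_2} b_j. -/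
/-- Tightness: for even n ≥ 6, A₁ = {n} and A₂ = {2i+1 : 0 ≤ i ≤ n/2−2} satisfy
|A₁| + |A₂| = n/2 and have equal sums. -/
theorem stmt_8 (n : ℕ) (hn : 6 ≤ n) (heven : Even n) (b : ℕ → ℕ)
    (hb1 : ∀ i, 1 ≤ i → i ≤ n - 1 → b i = 2 ^ (i - 1))
    (hbn : b n = ∑ j ∈ Finset.range ((n - 1) / 2), 2 ^ (2 * j)) :
    let A₁ : Finset ℕ := {n}
    let A₂ : Finset ℕ := (Finset.range (n / 2 - 1)).image (fun i => 2 * i + 1)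
    A₁.card + A₂.card = n / 2 ∧ ∑ i ∈ A₁, b i = ∑ j ∈ A₂, b j := by
  intro A₁ A₂
  obtain ⟨m, hm⟩ := heven
  have hmn : n = 2 * m := by omega
  subst hmn
  have hinj : Set.InjOn (fun i => 2 * i + 1) (Finset.range (2 * m / 2 - 1)) := by
    intro a _ b _ h; dsimp at h; omega
  constructor
  · have : A₂.card = 2 * m / 2 - 1 := by
      rw [Finset.card_image_of_injOn hinj, Finset.card_range]
    simp [A₁, this]; omega
  · have hs : ∑ j ∈ A₂, b j = ∑ i ∈ Finset.range (2 * m / 2 - 1), b (2 * i + 1) :=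
      Finset.sum_image (fun a ha b hb h => hinj ha hb h)
    rw [hs]
    have h1 : ∑ i ∈ A₁, b i = b (2 * m) := Finset.sum_singleton _ _
    rw [h1, hbn]
    have heq : (2 * m - 1) / 2 = 2 * m / 2 - 1 := by omega
    rw [heq]
    apply Finset.sum_congr rfl
    intro i hi
    simp only [Finset.mem_range] at hi
    rw [hb1 (2 * i + 1) (by omega) (by omega)]
    congr 1 <;> omega
end

section
/- Fix n ≥ 1 and define b_i = 2^{i−1} for 1 ≤ i ≤ n−1, and b_n = ∑_{0 ≤ j < n/2 − 1} 2^{2j}. Then for any two subsets A_1, A_2 of {1,…,n} with |A_1| + |A_2| < (n−1)/2, we have ∑_{i∈A_1} b_i ≠ 2^{n−1} + ∑_{j∈A_2} b_j. -/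
private def sB (k : ℕ) : ℕ := ∑ j ∈ Finset.range k, 2 ^ (2 * j)

private def sS (E : Finset ℕ) : ℕ := ∑ e ∈ E, 2 ^ e

private def sHf (E : Finset ℕ) : Finset ℕ := (E.erase 0).image (· - 1)

private lemma sB_succ (k : ℕ) : sB (k + 1) = 4 * sB k + 1 := by
  rw [sB, Finset.sum_range_succ', sB, Finset.mul_sum]
  have h : ∀ j ∈ Finset.range k, 2 ^ (2 * (j+1)) = 4 * 2 ^ (2 * j) := by
    intro j _
    rw [show 2 * (j + 1) = (2 * j) + 2 by ring, pow_add]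
    ring
  rw [Finset.sum_congr rfl h]
  norm_num

private lemma sS_spec (E : Finset ℕ) :
    sS E = (if 0 ∈ E then 1 else 0) + 2 * sS (sHf E) := by
  have h2 : 2 * sS (sHf E) = ∑ e ∈ E.erase 0, 2 ^ e := by
    rw [sS, sHf, Finset.sum_image (fun x hx y hy hxy => by
      have hx0 := (Finset.mem_erase.mp hx).1
      have hy0 := (Finset.mem_erase.mp hy).1
      omega), Finset.mul_sum]
    refine Finset.sum_congr rfl fun e he => ?_
    have he0 : e ≠ 0 := (Finset.mem_erase.mp he).1
    rw [← pow_succ']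
    congr 1
    omega
  by_cases h0 : 0 ∈ E
  · rw [if_pos h0, h2, sS, ← Finset.add_sum_erase E _ h0]
    norm_num
  · rw [if_neg h0, h2, Finset.erase_eq_of_notMem h0, sS]
    omega

private lemma card_sHf_le (E : Finset ℕ) : (sHf E).card ≤ E.card :=
  le_trans Finset.card_image_le (Finset.card_erase_le)

private lemma card_sHf_mem (E : Finset ℕ) (h : 0 ∈ E) : (sHf E).card + 1 ≤ E.card := by
  have h1 : (sHf E).card ≤ (E.erase 0).card := Finset.card_image_le
  have h2 : (E.erase 0).card = E.card - 1 := Finset.card_erase_of_mem h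
  have h3 : 1 ≤ E.card := Finset.card_pos.mpr ⟨0, h⟩
  omega

private lemma key (k : ℕ) :
    (∀ m (E₁ E₂ : Finset ℕ), 2 * k ≤ m →
      sB k + sS E₁ = 2 ^ m + sS E₂ → k ≤ E₁.card + E₂.card) ∧
    (∀ m (E₁ E₂ : Finset ℕ), 2 * k + 1 ≤ m →
      2 * sB k + 1 + sS E₁ = 2 ^ m + sS E₂ → k ≤ E₁.card + E₂.card) := by
  induction k using Nat.strong_induction_on with
  | _ k ih =>
    match k with
    | 0 => exact ⟨fun _ _ _ _ _ => Nat.zero_le _, fun _ _ _ _ _ => Nat.zero_le _⟩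
    | (k' + 1) =>
      have hA : ∀ m (E₁ E₂ : Finset ℕ), 2 * (k' + 1) ≤ m →
          sB (k' + 1) + sS E₁ = 2 ^ m + sS E₂ → k' + 1 ≤ E₁.card + E₂.card := by
        intro m E₁ E₂ hm heq
        have hb := sB_succ k'
        have e1 := sS_spec E₁
        have e2 := sS_spec E₂
        have hp1 : 2 ^ m = 2 * 2 ^ (m - 1) := by
          rw [← pow_succ']; congr 1; omega
        have hp2 : 2 ^ (m - 1) = 2 * 2 ^ (m - 2) := by
          rw [← pow_succ']; congr 1; omega
        by_cases h1 : 0 ∈ E₁ <;> by_cases h2 : 0 ∈ E₂ <;>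
          simp only [h1, h2, if_true, if_false] at e1 e2
        · -- (1,1): parity contradiction
          omega
        · -- (1,0): recurse to Hh(k')
          have hrec := (ih k' (by omega)).2 (m - 1) (sHf E₁) (sHf E₂) (by omega) (by omega)
          have c1 := card_sHf_mem E₁ h1
          have c2 := card_sHf_le E₂
          omega
        · -- (0,1): double halving, recurse to A(k')
          have e1' := sS_spec (sHf E₁)
          have e2' := sS_spec (sHf E₂)
          by_cases g1 : 0 ∈ sHf E₁ <;> by_cases g2 : 0 ∈ sHf E₂ <;>
            simp only [g1, g2, if_true, if_false] at e1' e2'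
          · have hrec := (ih k' (by omega)).1 (m - 2) (sHf (sHf E₁)) (sHf (sHf E₂))
              (by omega) (by omega)
            have c1 := card_sHf_le E₁
            have c2 := card_sHf_mem E₂ h2
            have c1' := card_sHf_le (sHf E₁)
            have c2' := card_sHf_le (sHf E₂)
            omega
          · omega
          · omega
          · have hrec := (ih k' (by omega)).1 (m - 2) (sHf (sHf E₁)) (sHf (sHf E₂))
              (by omega) (by omega)
            have c1 := card_sHf_le E₁
            have c2 := card_sHf_mem E₂ h2
            have c1' := card_sHf_le (sHf E₁)
            have c2' := card_sHf_le (sHf E₂)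
            omega
        · -- (0,0): parity contradiction
          omega
      refine ⟨hA, ?_⟩
      intro m E₁ E₂ hm heq
      have hb := sB_succ k'
      have e1 := sS_spec E₁
      have e2 := sS_spec E₂
      have hp1 : 2 ^ m = 2 * 2 ^ (m - 1) := by
        rw [← pow_succ']; congr 1; omega
      have hp2 : 2 ^ (m - 1) = 2 * 2 ^ (m - 2) := by
        rw [← pow_succ']; congr 1; omega
      by_cases h1 : 0 ∈ E₁ <;> by_cases h2 : 0 ∈ E₂ <;>
        simp only [h1, h2, if_true, if_false] at e1 e2
      · -- (1,1): parity contradiction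
        omega
      · -- (1,0): double halving, recurse to Hh(k')
        have e1' := sS_spec (sHf E₁)
        have e2' := sS_spec (sHf E₂)
        by_cases g1 : 0 ∈ sHf E₁ <;> by_cases g2 : 0 ∈ sHf E₂ <;>
          simp only [g1, g2, if_true, if_false] at e1' e2'
        · have hrec := (ih k' (by omega)).2 (m - 2) (sHf (sHf E₁)) (sHf (sHf E₂))
            (by omega) (by omega)
          have c1 := card_sHf_mem E₁ h1
          have c2 := card_sHf_le E₂
          have c1' := card_sHf_le (sHf E₁)
          have c2' := card_sHf_le (sHf E₂)
          omega
        · omega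
        · omega
        · have hrec := (ih k' (by omega)).2 (m - 2) (sHf (sHf E₁)) (sHf (sHf E₂))
            (by omega) (by omega)
          have c1 := card_sHf_mem E₁ h1
          have c2 := card_sHf_le E₂
          have c1' := card_sHf_le (sHf E₁)
          have c2' := card_sHf_le (sHf E₂)
          omega
      · -- (0,1): recurse to A(k'+1)
        have hrec := hA (m - 1) (sHf E₁) (sHf E₂) (by omega) (by omega)
        have c1 := card_sHf_le E₁
        have c2 := card_sHf_mem E₂ h2
        omega
      · -- (0,0): parity contradiction
        omega

private lemma sum_range_pow_two (t : ℕ) : ∑ e ∈ Finset.range t, 2 ^ e = 2 ^ t - 1 := by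
  induction t with
  | zero => simp
  | succ t ih =>
    rw [Finset.sum_range_succ, ih, pow_succ]
    have : 1 ≤ 2 ^ t := Nat.one_le_two_pow
    omega

private lemma sS_le (E : Finset ℕ) (t : ℕ) (h : E ⊆ Finset.range t) : sS E + 1 ≤ 2 ^ t := by
  have h1 : sS E ≤ ∑ e ∈ Finset.range t, 2 ^ e :=
    Finset.sum_le_sum_of_subset h
  have h2 := sum_range_pow_two t
  have h3 : 1 ≤ 2 ^ t := Nat.one_le_two_pow
  omega

private lemma sum_b_eq (n : ℕ) (b : ℕ → ℕ)
    (hb1 : ∀ i, 1 ≤ i → i ≤ n - 1 → b i = 2 ^ (i - 1))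
    (A : Finset ℕ) (hA : A ⊆ Finset.Icc 1 n) (hn : n ∉ A) :
    ∑ i ∈ A, b i = sS (A.image (· - 1)) ∧
    (A.image (· - 1)).card = A.card ∧
    A.image (· - 1) ⊆ Finset.range (n - 1) := by
  have hmem : ∀ i ∈ A, 1 ≤ i ∧ i ≤ n - 1 := by
    intro i hi
    have h1 := Finset.mem_Icc.mp (hA hi)
    have h2 : i ≠ n := fun h => hn (h ▸ hi)
    omega
  have hinj : ∀ x ∈ A, ∀ y ∈ A, x - 1 = y - 1 → x = y := by
    intro x hx y hy h
    have := hmem x hx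
    have := hmem y hy
    omega
  refine ⟨?_, Finset.card_image_of_injOn hinj, ?_⟩
  · rw [sS, Finset.sum_image hinj]
    exact Finset.sum_congr rfl fun i hi => hb1 i (hmem i hi).1 (hmem i hi).2
  · intro e he
    obtain ⟨i, hi, rfl⟩ := Finset.mem_image.mp he
    have := hmem i hi
    rw [Finset.mem_range]
    omega

/-- No sum of fewer than (n−1)/2 total elements of the sequence b equals
another such sum shifted by 2^{n−1}. -/
theorem stmt_9 (n : ℕ) (hn : 1 ≤ n) (b : ℕ → ℕ)
    (hb1 : ∀ i, 1 ≤ i → i ≤ n - 1 → b i = 2 ^ (i - 1))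
    (hbn : b n = ∑ j ∈ Finset.range ((n - 1) / 2), 2 ^ (2 * j))
    (A₁ A₂ : Finset ℕ) (h₁ : A₁ ⊆ Finset.Icc 1 n) (h₂ : A₂ ⊆ Finset.Icc 1 n)
    (hcard : ((A₁.card : ℝ) + (A₂.card : ℝ)) < ((n : ℝ) - 1) / 2) :
    ∑ i ∈ A₁, b i ≠ 2 ^ (n - 1) + ∑ j ∈ A₂, b j := by
  intro heq
  have hc : 2 * (A₁.card + A₂.card) + 2 ≤ n := by
    have h1 : ((2 * (A₁.card + A₂.card) + 1 : ℕ) : ℝ) < n := by push_cast; linarith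
    have h2 : (2 * (A₁.card + A₂.card) + 1 : ℕ) < n := by exact_mod_cast h1
    omega
  have hbn' : b n = sB ((n - 1) / 2) := hbn
  have hpos : 1 ≤ 2 ^ (n - 1) := Nat.one_le_two_pow
  by_cases hn1 : n ∈ A₁
  · have hA1sub : A₁.erase n ⊆ Finset.Icc 1 n := fun i hi => h₁ (Finset.mem_of_mem_erase hi)
    obtain ⟨hs1, hc1, hr1⟩ := sum_b_eq n b hb1 (A₁.erase n) hA1sub (Finset.notMem_erase n A₁)
    have hsplit1 : ∑ i ∈ A₁, b i = b n + ∑ i ∈ A₁.erase n, b i :=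
      (Finset.add_sum_erase _ _ hn1).symm
    have hcA1 : (A₁.erase n).card = A₁.card - 1 := Finset.card_erase_of_mem hn1
    have hcA1' : 1 ≤ A₁.card := Finset.card_pos.mpr ⟨n, hn1⟩
    by_cases hn2 : n ∈ A₂
    · -- b n cancels; LHS powers < 2^(n-1)
      have hA2sub : A₂.erase n ⊆ Finset.Icc 1 n := fun i hi => h₂ (Finset.mem_of_mem_erase hi)
      obtain ⟨hs2, hc2, hr2⟩ := sum_b_eq n b hb1 (A₂.erase n) hA2sub (Finset.notMem_erase n A₂)
      have hsplit2 : ∑ i ∈ A₂, b i = b n + ∑ i ∈ A₂.erase n, b i :=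
        (Finset.add_sum_erase _ _ hn2).symm
      have hle := sS_le _ _ hr1
      omega
    · -- hard case: n ∈ A₁, n ∉ A₂
      obtain ⟨hs2, hc2, hr2⟩ := sum_b_eq n b hb1 A₂ h₂ hn2
      have hkey := (key ((n - 1) / 2)).1 (n - 1)
        ((A₁.erase n).image (· - 1)) (A₂.image (· - 1)) (by omega) (by omega)
      omega
  · -- n ∉ A₁ : LHS < 2^(n-1)
    obtain ⟨hs1, hc1, hr1⟩ := sum_b_eq n b hb1 A₁ h₁ hn1
    have hle := sS_le _ _ hr1
    omega
end

section
/- Let (c_1,…,c_{n'}) be a sequence of positive integers, bounded by M, such that all subsets A ⊆ {1,…,n'} with |A| ≤ λ'n' have pairwise distinct sums. For k ≥ 1, set n = k·n' and λ = λ'/k, and define the sequence (a_1,…,a_n) in ℤ^k by placing k copies of the original sequence on the k coordinate axes: for 1 ≤ j ≤ k and 1 ≤ i ≤ n', a_{(j−1)n' + i} is the vector whose j-th coordinate is c_i and whose other coordinates are 0. Then (a_1,…,a_n) is M-bounded and all subsets A ⊆ {1,…,n} with |A| ≤ λn have pairwise distinct (vector) sums. -/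
/-!
A subset `A` of the `k n'` positions is the disjoint union of its `k` block slices. The
`t`-th coordinate of `∑ m ∈ A, a m` is the `c`-sum over the `t`-th slice, and no slice is
larger than `A`. So equal vector sums give equal `c`-sums slice by slice, hence equal slices,
hence equal sets.
-/

open Finset

section AxisPlacement

variable {β : Type*} {n' k : ℕ}

lemma eq_and_eq_of_mul_add_eq {t t' i i' : ℕ} (hi : i ∈ Icc 1 n') (hi' : i' ∈ Icc 1 n')
    (h : t * n' + i = t' * n' + i') : t = t' ∧ i = i' := by
  rw [mem_Icc] at hi hi'
  have block_lt {s s' : ℕ} (hs : s < s') : s * n' + n' ≤ s' * n' := by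
    simpa [add_mul] using Nat.mul_le_mul_right n' (Nat.succ_le_of_lt hs)
  rcases lt_trichotomy t t' with hlt | rfl | hgt
  · have := block_lt hlt; omega
  · omega
  · have := block_lt hgt; omega

lemma exists_eq_mul_add_of_mem_Icc {m : ℕ} (hm : m ∈ Icc 1 (k * n')) :
    ∃ t : Fin k, ∃ i ∈ Icc 1 n', m = t * n' + i := by
  rw [mem_Icc] at hm
  have hn' : 0 < n' := Nat.pos_of_ne_zero (by rintro rfl; omega)
  have ht : (m - 1) / n' < k := Nat.div_lt_of_lt_mul (by rw [mul_comm]; omega)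
  refine ⟨⟨(m - 1) / n', ht⟩, (m - 1) % n' + 1, ?_, ?_⟩
  · rw [mem_Icc]
    have := Nat.mod_lt (m - 1) hn'
    omega
  · have := Nat.div_add_mod' (m - 1) n'
    show m = (m - 1) / n' * n' + ((m - 1) % n' + 1)
    omega

/-- Blocks are indexed from `0`: the paper's `a_{(j-1)n'+i}` is `a (t * n' + i)`, `t = j - 1`. -/
def IsAxisPlacement [Zero β] (n' : ℕ) (c : ℕ → β) (a : ℕ → Fin k → β) : Prop :=
  ∀ t : Fin k, ∀ i ∈ Icc 1 n', a (t * n' + i) = Pi.single t (c i)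

def SumDistinctUpTo [AddCommMonoid β] (s : Finset ℕ) (r : ℝ) (f : ℕ → β) : Prop :=
  ∀ A₁ A₂ : Finset ℕ, A₁ ⊆ s → A₂ ⊆ s → (#A₁ : ℝ) ≤ r → (#A₂ : ℝ) ≤ r →
    ∑ i ∈ A₁, f i = ∑ i ∈ A₂, f i → A₁ = A₂

def blockSlice (n' t : ℕ) (A : Finset ℕ) : Finset ℕ :=
  (Icc 1 n').filter fun i => t * n' + i ∈ A

lemma blockSlice_subset (t : ℕ) (A : Finset ℕ) : blockSlice n' t A ⊆ Icc 1 n' :=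
  filter_subset _ _

lemma card_blockSlice_le (t : ℕ) (A : Finset ℕ) : #(blockSlice n' t A) ≤ #A :=
  card_le_card_of_injOn (t * n' + ·) (fun _ hi => (mem_filter.1 hi).2)
    (fun _ _ _ _ h => Nat.add_left_cancel h)

lemma biUnion_image_blockSlice {A : Finset ℕ} (hA : A ⊆ Icc 1 (k * n')) :
    univ.biUnion (fun t : Fin k => (blockSlice n' t A).image (t * n' + ·)) = A := by
  ext m
  simp only [mem_biUnion, mem_image, blockSlice, mem_filter, mem_Icc, mem_univ, true_and]
  constructor
  · rintro ⟨t, i, ⟨-, hm⟩, rfl⟩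
    exact hm
  · intro hm
    obtain ⟨t, i, hi, rfl⟩ := exists_eq_mul_add_of_mem_Icc (hA hm)
    exact ⟨t, i, ⟨mem_Icc.1 hi, hm⟩, rfl⟩

lemma eq_of_blockSlice_eq {A₁ A₂ : Finset ℕ} (hA₁ : A₁ ⊆ Icc 1 (k * n'))
    (hA₂ : A₂ ⊆ Icc 1 (k * n')) (h : ∀ t : Fin k, blockSlice n' t A₁ = blockSlice n' t A₂) :
    A₁ = A₂ := by
  rw [← biUnion_image_blockSlice hA₁, ← biUnion_image_blockSlice hA₂]
  simp only [h]

namespace IsAxisPlacement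

variable {c : ℕ → β} {a : ℕ → Fin k → β}

lemma sum_eq [AddCommMonoid β] (ha : IsAxisPlacement n' c a) {A : Finset ℕ}
    (hA : A ⊆ Icc 1 (k * n')) :
    ∑ m ∈ A, a m = fun t : Fin k => ∑ i ∈ blockSlice n' t A, c i := by
  have hdisj : ((univ : Finset (Fin k)) : Set (Fin k)).PairwiseDisjoint
      (fun t : Fin k => (blockSlice n' t A).image (t * n' + ·)) := by
    intro t _ t' _ htt'
    simp only [Function.onFun, disjoint_left, mem_image]
    rintro _ ⟨i, hi, rfl⟩ ⟨i', hi', h⟩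
    exact htt' (Fin.ext (eq_and_eq_of_mul_add_eq (blockSlice_subset _ _ hi')
      (blockSlice_subset _ _ hi) h).1.symm)
  calc ∑ m ∈ A, a m
      = ∑ t : Fin k, ∑ i ∈ blockSlice n' t A, a (t * n' + i) := by
        conv_lhs => rw [← biUnion_image_blockSlice hA, sum_biUnion hdisj]
        refine sum_congr rfl fun t _ => sum_image fun i hi i' hi' h => ?_
        exact (eq_and_eq_of_mul_add_eq (blockSlice_subset _ _ hi)
          (blockSlice_subset _ _ hi') h).2
    _ = ∑ t : Fin k, Pi.single t (∑ i ∈ blockSlice n' t A, c i) := by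
        refine sum_congr rfl fun t _ => ?_
        rw [sum_congr rfl fun i hi => ha t i (blockSlice_subset _ _ hi)]
        exact (map_sum (AddMonoidHom.single (fun _ : Fin k => β) t) _ _).symm
    _ = fun t : Fin k => ∑ i ∈ blockSlice n' t A, c i := univ_sum_single _

lemma bounded [Zero β] [Preorder β] (ha : IsAxisPlacement n' c a) {M : β}
    (hc : ∀ i ∈ Icc 1 n', 0 ≤ c i ∧ c i ≤ M) :
    ∀ m ∈ Icc 1 (k * n'), ∀ l : Fin k, 0 ≤ a m l ∧ a m l ≤ M := by
  intro m hm l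
  obtain ⟨t, i, hi, rfl⟩ := exists_eq_mul_add_of_mem_Icc hm
  rw [ha t i hi, Pi.single_apply]
  split_ifs
  · exact hc i hi
  · exact ⟨le_rfl, (hc i hi).1.trans (hc i hi).2⟩

lemma sumDistinctUpTo [AddCommMonoid β] (ha : IsAxisPlacement n' c a) {r : ℝ}
    (hc : SumDistinctUpTo (Icc 1 n') r c) : SumDistinctUpTo (Icc 1 (k * n')) r a := by
  intro A₁ A₂ hA₁ hA₂ hr₁ hr₂ hsum
  rw [ha.sum_eq hA₁, ha.sum_eq hA₂] at hsum
  refine eq_of_blockSlice_eq hA₁ hA₂ fun t => hc _ _ (blockSlice_subset _ _)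
    (blockSlice_subset _ _) ?_ ?_ (congrFun hsum t)
  · exact le_trans (by exact_mod_cast card_blockSlice_le _ _) hr₁
  · exact le_trans (by exact_mod_cast card_blockSlice_le _ _) hr₂

end IsAxisPlacement

end AxisPlacement

/-- Placing k copies of an M-bounded F_{λ',n'}-sum distinct integer sequence on
the k coordinate axes yields an M-bounded F_{λ'/k, kn'}-sum distinct sequence
in ℤ^k. -/
theorem stmt_11 (n' k M : ℕ) (hk : 1 ≤ k) (lam' : ℝ) (c : ℕ → ℤ)
    (hc : ∀ i ∈ Finset.Icc 1 n', 0 < c i ∧ c i ≤ (M : ℤ))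
    (hdist : ∀ A₁ A₂ : Finset ℕ, A₁ ⊆ Finset.Icc 1 n' → A₂ ⊆ Finset.Icc 1 n' →
      (A₁.card : ℝ) ≤ lam' * n' → (A₂.card : ℝ) ≤ lam' * n' →
      ∑ i ∈ A₁, c i = ∑ i ∈ A₂, c i → A₁ = A₂)
    (a : ℕ → Fin k → ℤ)
    (hadef : ∀ j, 1 ≤ j → j ≤ k → ∀ i, 1 ≤ i → i ≤ n' → ∀ l : Fin k,
      a ((j - 1) * n' + i) l = if (l : ℕ) + 1 = j then c i else 0) :
    (∀ m ∈ Finset.Icc 1 (k * n'), ∀ l : Fin k, 0 ≤ a m l ∧ a m l ≤ (M : ℤ)) ∧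
    (∀ A₁ A₂ : Finset ℕ, A₁ ⊆ Finset.Icc 1 (k * n') → A₂ ⊆ Finset.Icc 1 (k * n') →
      (A₁.card : ℝ) ≤ (lam' / k) * (k * n') →
      (A₂.card : ℝ) ≤ (lam' / k) * (k * n') →
      (∑ i ∈ A₁, a i) = (∑ i ∈ A₂, a i) → A₁ = A₂) := by
  have ha : IsAxisPlacement n' c a := by
    intro t i hi
    rw [mem_Icc] at hi
    ext l
    simpa [Pi.single_apply, Fin.ext_iff] using hadef (t + 1) (by omega) t.isLt i hi.1 hi.2 l
  have hr : lam' / k * (k * n') = lam' * n' := by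
    field_simp [(Nat.cast_ne_zero.2 (by omega) : (k : ℝ) ≠ 0)]
  refine ⟨ha.bounded fun i hi => ⟨(hc i hi).1.le, (hc i hi).2⟩, ?_⟩
  rw [hr]
  exact ha.sumDistinctUpTo hdist
end

section
/- For every constant c > 0, the function g(t) = 2^{ct}/t is strictly convex on (0, ∞), and the minimum over positive integers t of g(t) is attained at t = ⌈1/(2^c − 1)⌉. -/
/-!
Since `2 ^ (c * t) = exp (a * t)` with `a = c * log 2`, convexity comes from the second
derivative `exp (a * t) * ((a * t - 1) ^ 2 + 1) / t ^ 3 > 0` of `exp (a * t) / t`.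
On the integers, with `r = 2 ^ c > 1`, the quotient of consecutive values of `r ^ n / n` is
`r * n / (n + 1)`, which is at least `1` exactly when `n ≥ 1 / (r - 1)`; hence the sequence
decreases up to `⌈1 / (r - 1)⌉` and increases from there on.
-/

open Real Set

theorem hasDerivAt_exp_mul_div (a : ℝ) {t : ℝ} (ht : t ≠ 0) :
    HasDerivAt (fun t => exp (a * t) / t) (exp (a * t) * (a * t - 1) / t ^ 2) t :=
  (((hasDerivAt_id' t).const_mul a).exp.fun_div (hasDerivAt_id' t) ht).congr_deriv (by ring)

theorem hasDerivAt_exp_mul_mul_sub_one_div (a : ℝ) {t : ℝ} (ht : t ≠ 0) :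
    HasDerivAt (fun t => exp (a * t) * (a * t - 1) / t ^ 2)
      (exp (a * t) * ((a * t - 1) ^ 2 + 1) / t ^ 3) t := by
  have hlin : HasDerivAt (fun t => a * t) a t :=
    ((hasDerivAt_id' t).const_mul a).congr_deriv (mul_one a)
  refine ((hlin.exp.fun_mul (hlin.sub_const 1)).fun_div (hasDerivAt_pow 2 t)
    (pow_ne_zero 2 ht)).congr_deriv ?_
  field_simp
  ring

theorem strictConvexOn_exp_mul_div (a : ℝ) :
    StrictConvexOn ℝ (Ioi 0) (fun t => exp (a * t) / t) := by
  refine strictConvexOn_of_deriv2_pos (convex_Ioi 0)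
    (ContinuousOn.div (by fun_prop) (by fun_prop) fun t ht => ht.ne') fun t ht => ?_
  replace ht : 0 < t := by rwa [interior_Ioi] at ht
  have hderiv : deriv (fun t => exp (a * t) / t) =ᶠ[nhds t]
      fun t => exp (a * t) * (a * t - 1) / t ^ 2 := by
    filter_upwards [eventually_ne_nhds ht.ne'] with s hs
    exact (hasDerivAt_exp_mul_div a hs).deriv
  rw [Function.iterate_succ_apply, Function.iterate_one, hderiv.deriv_eq,
    (hasDerivAt_exp_mul_mul_sub_one_div a ht.ne').deriv]
  positivity

theorem strictConvexOn_rpow_mul_div {b : ℝ} (hb : 0 < b) (c : ℝ) :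
    StrictConvexOn ℝ (Ioi 0) (fun t => b ^ (c * t) / t) := by
  simpa only [rpow_def_of_pos hb, mul_assoc] using strictConvexOn_exp_mul_div (log b * c)

theorem pow_div_le_pow_succ_div_iff {r : ℝ} (hr : 0 < r) {n : ℕ} (hn : 0 < n) :
    r ^ n / n ≤ r ^ (n + 1) / (n + 1 : ℕ) ↔ 1 ≤ n * (r - 1) := by
  rw [div_le_div_iff₀ (by positivity) (by positivity), pow_succ, mul_assoc,
    mul_le_mul_iff_right₀ (by positivity)]
  push_cast
  constructor <;> intro h <;> linarith

theorem pow_ceil_div_le_pow_div {r : ℝ} (hr : 1 < r) {m : ℕ} (hm : 0 < m) :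
    r ^ ⌈1 / (r - 1)⌉₊ / ⌈1 / (r - 1)⌉₊ ≤ r ^ m / m := by
  set τ := ⌈1 / (r - 1)⌉₊
  have hr0 : 0 < r := zero_lt_one.trans hr
  have hr1 : 0 < r - 1 := sub_pos.2 hr
  have hτ : 0 < τ := Nat.ceil_pos.2 (by positivity)
  have hdecr : AntitoneOn (fun n : ℕ => r ^ n / n) (Icc 1 τ) := by
    refine antitoneOn_of_succ_le ordConnected_Icc fun n _ hn hn1 => ?_
    rw [Order.succ_eq_add_one] at hn1 ⊢
    have hsmall : (n : ℝ) * (r - 1) < 1 := (lt_div_iff₀ hr1).1 (Nat.lt_ceil.1 hn1.2)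
    exact (not_le.1 fun h => hsmall.not_ge ((pow_div_le_pow_succ_div_iff hr0 hn.1).1 h)).le
  have hincr : MonotoneOn (fun n : ℕ => r ^ n / n) (Ici τ) := by
    refine monotoneOn_of_le_succ ordConnected_Ici fun n _ hn _ => ?_
    rw [Order.succ_eq_add_one]
    exact (pow_div_le_pow_succ_div_iff hr0 (hτ.trans_le hn)).2
      ((div_le_iff₀ hr1).1 ((Nat.le_ceil _).trans (Nat.cast_le.2 hn)))
  rcases le_total m τ with hmτ | hτm
  · exact hdecr ⟨hm, hmτ⟩ ⟨hτ, le_rfl⟩ hmτ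
  · exact hincr self_mem_Ici hτm hτm

/-- g(t) = 2^{ct}/t is strictly convex on (0,∞) and its minimum over positive
integers is attained at t = ⌈1/(2^c − 1)⌉. -/
theorem stmt_14 (c : ℝ) (hc : 0 < c) :
    StrictConvexOn ℝ (Set.Ioi (0 : ℝ)) (fun t : ℝ => (2 : ℝ) ^ (c * t) / t) ∧
    ∀ m : ℕ, 0 < m →
      (2 : ℝ) ^ (c * (⌈1 / ((2 : ℝ) ^ c - 1)⌉₊ : ℝ)) /
          (⌈1 / ((2 : ℝ) ^ c - 1)⌉₊ : ℝ) ≤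
        (2 : ℝ) ^ (c * (m : ℝ)) / (m : ℝ) := by
  refine ⟨strictConvexOn_rpow_mul_div two_pos c, fun m hm => ?_⟩
  simp only [rpow_mul zero_le_two, rpow_natCast]
  exact pow_ceil_div_le_pow_div (one_lt_rpow one_lt_two hc) hm
end

section
/- For every λ with 0 < λ ≤ 1/3, setting f(λ) = −2λ log_2 λ − (1−2λ) log_2(1−2λ) and τ_λ = ⌈1/(2^{f(λ)} − 1)⌉, the inequality λ < 2^{f(λ)·τ_λ} / (2·τ_λ) holds. -/
/-!
In nats, `f(λ) log 2 = 2λ (-log λ) - (1 - 2λ) log (1 - 2λ) > 2λ`, because `-log λ > 1` for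
`λ ≤ 1/3 < 1/e` and the second term is nonnegative. Hence `a := 2^{f(λ)} ≥ 1 + f(λ) log 2 > 1 + 2λ`,
and Bernoulli's inequality gives `a^τ ≥ 1 + τ (a - 1) > 2λτ` for every positive integer `τ`,
in particular for `τ = τ_λ`.
-/

open Real

noncomputable def ternaryEntropy (lam : ℝ) : ℝ :=
  -(2 * lam * logb 2 lam) - (1 - 2 * lam) * logb 2 (1 - 2 * lam)

lemma ternaryEntropy_mul_log_two (lam : ℝ) :
    ternaryEntropy lam * log 2 = -(2 * lam * log lam) - (1 - 2 * lam) * log (1 - 2 * lam) := by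
  unfold ternaryEntropy logb
  field_simp

lemma log_lt_neg_one_of_le_one_third {x : ℝ} (h0 : 0 < x) (h3 : x ≤ 1 / 3) : log x < -1 := by
  rw [log_lt_iff_lt_exp h0, exp_neg]
  calc x ≤ 1 / 3 := h3
    _ < (exp 1)⁻¹ := by rw [one_div]; exact inv_strictAnti₀ (exp_pos 1) exp_one_lt_three

section

variable {lam : ℝ} (h0 : 0 < lam) (h3 : lam ≤ 1 / 3)
include h0 h3

lemma two_mul_lt_ternaryEntropy_mul_log_two : 2 * lam < ternaryEntropy lam * log 2 := by
  have hlog : log lam < -1 := log_lt_neg_one_of_le_one_third h0 h3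
  have hrest : 0 ≤ -(1 - 2 * lam) * log (1 - 2 * lam) :=
    mul_nonneg_of_nonpos_of_nonpos (by linarith) (log_nonpos (by linarith) (by linarith))
  rw [ternaryEntropy_mul_log_two]
  nlinarith

lemma one_add_two_mul_lt_two_rpow_ternaryEntropy : 1 + 2 * lam < 2 ^ ternaryEntropy lam :=
  calc 1 + 2 * lam < ternaryEntropy lam * log 2 + 1 := by
        linarith [two_mul_lt_ternaryEntropy_mul_log_two h0 h3]
    _ ≤ exp (ternaryEntropy lam * log 2) := add_one_le_exp _
    _ = 2 ^ ternaryEntropy lam := by rw [rpow_def_of_pos two_pos, mul_comm]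

end

lemma lt_pow_div_two_mul {a x : ℝ} {n : ℕ} (ha : -1 ≤ a) (hx : 2 * x < a - 1) (hn : 0 < n) :
    x < a ^ n / (2 * n) := by
  have hn' : (0 : ℝ) < n := by exact_mod_cast hn
  rw [lt_div_iff₀ (by positivity)]
  calc x * (2 * n) = n * (2 * x) := by ring
    _ < n * (a - 1) := by gcongr
    _ < 1 + n * (a - 1) := lt_one_add _
    _ ≤ a ^ n := one_add_mul_sub_le_pow ha n

/-- For 0 < λ ≤ 1/3, with f(λ) the ternary entropy and τ_λ = ⌈1/(2^{f(λ)}−1)⌉,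
we have λ < 2^{f(λ)τ_λ}/(2τ_λ). -/
theorem stmt_15 (lam : ℝ) (h0 : 0 < lam) (h3 : lam ≤ 1/3) :
    lam <
      (2 : ℝ) ^ ((-(2 * lam * Real.logb 2 lam) -
          (1 - 2 * lam) * Real.logb 2 (1 - 2 * lam)) *
        (⌈1 / ((2 : ℝ) ^ (-(2 * lam * Real.logb 2 lam) -
          (1 - 2 * lam) * Real.logb 2 (1 - 2 * lam)) - 1)⌉₊ : ℝ)) /
      (2 * (⌈1 / ((2 : ℝ) ^ (-(2 * lam * Real.logb 2 lam) -
          (1 - 2 * lam) * Real.logb 2 (1 - 2 * lam)) - 1)⌉₊ : ℝ)) := by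
  have ha : 1 + 2 * lam < 2 ^ ternaryEntropy lam :=
    one_add_two_mul_lt_two_rpow_ternaryEntropy h0 h3
  have hτ : 0 < ⌈1 / ((2 : ℝ) ^ ternaryEntropy lam - 1)⌉₊ :=
    Nat.ceil_pos.mpr (one_div_pos.mpr (by linarith))
  rw [rpow_mul_natCast zero_le_two]
  exact lt_pow_div_two_mul (a := 2 ^ ternaryEntropy lam) (by linarith) (by linarith) hτ
end
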